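/- Let ξ, η be nonzero complex numbers. Then H(ξ,η) equals the whole unit circle {z ∈ ℂ : |z| = 1} if and only if there exists an irrational real number α with e^{2πiα} ∈ H(ξ,η). -/

import Mathlib

/-!
`H(ξ, η)` is the part on the unit circle of the slice over `1` of the closure of
`{(ξ ^ n * η ^ m, (ξ / |ξ|) ^ n) : n, m ∈ ℤ}`, so it is closed and stable under integer powers
(`(a, b) ↦ (a ^ c, b ^ c)` maps that set into itself and is continuous at `(1, z)`). Once it
contains `e^{2πiα}` with `α` irrational, it therefore contains the closure of the powers of that
point, which is the whole circle because irrational rotations have dense orbits.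
-/

open Filter Topology

/-- For nonzero ξ, η, `Hset ξ η` is the set of z with |z| = 1 for which there
are integer sequences (n_k), (m_k) with ξ^{n_k} · η^{m_k} → 1 and
(ξ/|ξ|)^{n_k} → z. -/
def Hset (ξ η : ℂ) : Set ℂ :=
  {z : ℂ | ‖z‖ = 1 ∧ ∃ n m : ℕ → ℤ,
    Tendsto (fun k => ξ ^ (n k) * η ^ (m k)) atTop (𝓝 1) ∧
    Tendsto (fun k => (ξ / (‖ξ‖ : ℂ)) ^ (n k)) atTop (𝓝 z)}

open Set Real

namespace Hset

def orbit (ξ η : ℂ) : Set (ℂ × ℂ) :=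
  range fun p : ℤ × ℤ => (ξ ^ p.1 * η ^ p.2, (ξ / (‖ξ‖ : ℂ)) ^ p.1)

theorem eq_inter_closure_orbit (ξ η : ℂ) :
    Hset ξ η = {z | ‖z‖ = 1} ∩ {z | ((1 : ℂ), z) ∈ closure (orbit ξ η)} := by
  ext z
  simp only [Hset, orbit, mem_inter_iff, mem_ofPred_eq, mem_closure_iff_seq_limit, mem_range,
    nhds_prod_eq, tendsto_prod_iff', and_congr_right_iff]
  intro _
  constructor
  · rintro ⟨n, m, h1, hz⟩
    exact ⟨_, fun k => ⟨(n k, m k), rfl⟩, h1, hz⟩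
  · rintro ⟨x, hx, h1, hz⟩
    choose p hp using hx
    obtain rfl := funext fun k => (hp k).symm
    exact ⟨fun k => (p k).1, fun k => (p k).2, h1, hz⟩

theorem isClosed (ξ η : ℂ) : IsClosed (Hset ξ η) := by
  rw [eq_inter_closure_orbit]
  exact (isClosed_eq continuous_norm continuous_const).inter
    (isClosed_closure.preimage (Continuous.prodMk_right 1))

theorem zpow_mem {ξ η z : ℂ} (hz : z ∈ Hset ξ η) (c : ℤ) : z ^ c ∈ Hset ξ η := by
  rw [eq_inter_closure_orbit] at hz ⊢
  obtain ⟨hz1, hzc⟩ := hz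
  refine ⟨by rw [mem_ofPred_eq, norm_zpow, hz1, one_zpow], ?_⟩
  have hz0 : z ≠ 0 := by rintro rfl; simp at hz1
  let powPair : ℂ × ℂ → ℂ × ℂ := Prod.map (· ^ c) (· ^ c)
  have hcont : ContinuousAt powPair (1, z) :=
    (continuousAt_zpow₀ (1 : ℂ) c (.inl one_ne_zero)).prodMap (continuousAt_zpow₀ z c (.inl hz0))
  have hmaps : powPair '' orbit ξ η ⊆ orbit ξ η := by
    rintro _ ⟨_, ⟨⟨n, m⟩, rfl⟩, rfl⟩
    exact ⟨(n * c, m * c), by simp [powPair, zpow_mul, mul_zpow]⟩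
  simpa [powPair] using closure_mono hmaps (mem_closure_image hcont hzc)

end Hset

theorem denseRange_zpow_circleExp {α : ℝ} (hα : Irrational α) :
    DenseRange fun n : ℤ => Circle.exp (2 * π * α) ^ n := by
  have hdense : DenseRange (· • (α : AddCircle (1 : ℝ)) : ℤ → AddCircle (1 : ℝ)) :=
    AddCircle.denseRange_zsmul_coe_iff.2 (by rwa [div_one])
  let e := AddCircle.homeomorphCircle (T := 1) one_ne_zero
  convert e.surjective.denseRange.comp hdense e.continuous using 2 with n
  simp [e, AddCircle.homeomorphCircle_apply, AddCircle.toCircle_zsmul,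
    AddCircle.toCircle_apply_mk]

theorem unitCircle_subset_of_isClosed_of_zpow_mem {S : Set ℂ} (hS : IsClosed S) {α : ℝ}
    (hα : Irrational α) (hmem : ∀ n : ℤ, Complex.exp (2 * π * Complex.I * α) ^ n ∈ S) :
    {z : ℂ | ‖z‖ = 1} ⊆ S := by
  intro z hz
  have hcirc (c : Circle) : (c : ℂ) ∈ S := by
    refine (denseRange_zpow_circleExp hα).induction_on c
      (hS.preimage continuous_subtype_val) fun n => ?_
    rw [Circle.coe_zpow, Circle.coe_exp]
    convert hmem n using 3
    push_cast
    ring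
  exact hcirc ⟨z, by simpa [Submonoid.unitSphere] using hz⟩

theorem Hset_eq_circle_iff_irrational_general (ξ η : ℂ) :
    Hset ξ η = {z : ℂ | ‖z‖ = 1} ↔
      ∃ α : ℝ, Irrational α ∧ Complex.exp (2 * Real.pi * Complex.I * α) ∈ Hset ξ η := by
  constructor
  · intro h
    refine ⟨√2, irrational_sqrt_two, h ▸ ?_⟩
    simp [Complex.norm_exp]
  · rintro ⟨α, hα, hmem⟩
    exact Subset.antisymm (fun z hz => hz.1)
      (unitCircle_subset_of_isClosed_of_zpow_mem (Hset.isClosed ξ η) hα (Hset.zpow_mem hmem))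

/-- For nonzero ξ, η, H(ξ,η) equals the whole unit circle iff
there exists an irrational real α with e^{2πiα} ∈ H(ξ,η). -/
theorem Hset_eq_circle_iff_irrational (ξ η : ℂ) (hξ : ξ ≠ 0) (hη : η ≠ 0) :
    Hset ξ η = {z : ℂ | ‖z‖ = 1} ↔
      ∃ α : ℝ, Irrational α ∧ Complex.exp (2 * Real.pi * Complex.I * α) ∈ Hset ξ η :=
  Hset_eq_circle_iff_irrational_general ξ η
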